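/- arXiv:math/0411036 — 4 statements merged into one kernel-verified Lean document; each statement's English description precedes it below -/
import Mathlib

section
/- Let n ≥ 1, 0 < α ≤ 1 and C > 0. Let h : B(0,1) ⊂ ℝⁿ → ℝ be a continuous function such that for every 0 < r < 1/2 and all y, z ∈ B(0,r) with y ≠ z, |h(y) − h(z)| ≤ |y − z|^α · ( (C/r^α) ⨍_{B(0,2r)} |h| + C r^{2−α} ). If ⨍_{B(0,r)} |h(y)| dy = o(r²) as r → 0⁺, then sup_{y ∈ B(0,r/2)} |h(y)| = o(r²) as r → 0⁺. -/
open MeasureTheory Metric Filter Finset Topology Asymptotics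

noncomputable section

/-- The `j`-th elementary symmetric function `S_j` on `ℝⁿ`. -/
def esymm (n j : ℕ) (lam : Fin n → ℝ) : ℝ :=
  ∑ s ∈ Finset.powersetCard j (Finset.univ : Finset (Fin n)), ∏ i ∈ s, lam i

/-- The eigenvalue vector of a symmetric matrix (junk value `0` if not symmetric). -/
def eigs (n : ℕ) (A : Matrix (Fin n) (Fin n) ℝ) : Fin n → ℝ :=
  if h : A.IsHermitian then h.eigenvalues else 0

/-- The cone `Γ_k = {λ : S_j(λ) ≥ 0, j = 1,…,k}`. -/
def Gamma (n k : ℕ) : Set (Fin n → ℝ) :=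
  {lam | ∀ j, 1 ≤ j → j ≤ k → 0 ≤ esymm n j lam}

/-- A quadratic polynomial with constant Hessian `A`. -/
def quadPoly (n : ℕ) (c : ℝ) (b : Fin n → ℝ) (A : Matrix (Fin n) (Fin n) ℝ)
    (x : EuclideanSpace ℝ (Fin n)) : ℝ :=
  c + ∑ i, b i * x i + (1 / 2) * ∑ i, ∑ j, A i j * x i * x j

/-- Viscosity definition of `k`-convexity on an open set `Ω`. -/
def KConvex (n k : ℕ) (Ω : Set (EuclideanSpace ℝ (Fin n)))
    (u : EuclideanSpace ℝ (Fin n) → EReal) : Prop :=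
  UpperSemicontinuousOn u Ω ∧
  (∀ x, u x ≠ ⊤) ∧
  (∀ x ∈ Ω, ∃ y ∈ connectedComponentIn Ω x, u y ≠ ⊥) ∧
  ∀ (c : ℝ) (b : Fin n → ℝ) (A : Matrix (Fin n) (Fin n) ℝ), A.IsHermitian →
    ∀ x₀ ∈ Ω, u x₀ ≠ ⊥ →
      IsLocalMaxOn (fun x => u x - (quadPoly n c b A x : EReal)) Ω x₀ →
      eigs n A ∈ Gamma n k

/-- Second partial derivatives (Hessian matrix) of a function on `ℝⁿ`. -/
def hess (n : ℕ) (f : EuclideanSpace ℝ (Fin n) → ℝ) (x : EuclideanSpace ℝ (Fin n)) :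
    Matrix (Fin n) (Fin n) ℝ :=
  Matrix.of fun i j =>
    fderiv ℝ (fun y => fderiv ℝ f y (EuclideanSpace.single j 1)) x (EuclideanSpace.single i 1)

/-! Around `y ∈ B(0, r/2)` the ball `B(y, θr)` lies in `B(0, r)`, so it contains a point `z` with
`|h z| ≤ θ⁻ⁿ ⨍_{B(0,r)} |h| = o(r²)`, while the Hölder estimate gives
`|h y - h z| ≤ C θ^α (⨍_{B(0,2r)} |h| + r²)`. Fixing `θ` with `C θ^α` small first, both terms are
at most `ε r² / 2` for small `r`. -/

section

variable {E : Type*} [NormedAddCommGroup E] [NormedSpace ℝ E] [FiniteDimensional ℝ E]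
  [MeasurableSpace E] [BorelSpace E] (μ : Measure E) [μ.IsAddHaarMeasure]

theorem setAverage_ball_le_of_subset {f : E → ℝ} (hf0 : ∀ w, 0 ≤ f w) {x y : E} {r ρ : ℝ}
    (hρ : 0 < ρ) (hsub : ball y ρ ⊆ ball x r) (hf : IntegrableOn f (ball x r) μ) :
    ⨍ w in ball y ρ, f w ∂μ ≤ (r / ρ) ^ Module.finrank ℝ E * ⨍ w in ball x r, f w ∂μ := by
  have hr : 0 < r := nonempty_ball.1 ((nonempty_ball.2 hρ).mono hsub)
  have hvol (z : E) {t : ℝ} (ht : 0 < t) :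
      μ.real (ball z t) = t ^ Module.finrank ℝ E * μ.real (ball 0 1) := by
    rw [measureReal_def, Measure.addHaar_ball_of_pos μ z ht, ENNReal.toReal_mul,
      ENNReal.toReal_ofReal (by positivity), measureReal_def]
  have hunit : μ.real (ball (0 : E) 1) ≠ 0 :=
    (ENNReal.toReal_pos (measure_ball_pos μ 0 one_pos).ne' measure_ball_lt_top.ne).ne'
  have hmono : ∫ w in ball y ρ, f w ∂μ ≤ ∫ w in ball x r, f w ∂μ :=
    setIntegral_mono_set hf (.of_forall hf0) hsub.eventuallyLE
  rw [setAverage_eq, setAverage_eq, hvol y hρ, hvol x hr, smul_eq_mul, smul_eq_mul, div_pow]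
  calc (ρ ^ Module.finrank ℝ E * μ.real (ball 0 1))⁻¹ * ∫ w in ball y ρ, f w ∂μ
      ≤ (ρ ^ Module.finrank ℝ E * μ.real (ball 0 1))⁻¹ * ∫ w in ball x r, f w ∂μ := by gcongr
    _ = _ := by field_simp

theorem abs_le_of_holder_of_setAverage {h : E → ℝ} {x y : E} {r θ α M : ℝ}
    (hα : 0 ≤ α) (hθ0 : 0 < θ) (hθ : θ ≤ 1 / 2) (hM : 0 ≤ M)
    (hint : IntegrableOn h (ball x r) μ)
    (hHolder : ∀ y ∈ ball x r, ∀ z ∈ ball x r, y ≠ z → |h y - h z| ≤ ‖y - z‖ ^ α * M)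
    (hy : y ∈ ball x (r / 2)) :
    |h y| ≤ (θ * r) ^ α * M + θ⁻¹ ^ Module.finrank ℝ E * ⨍ w in ball x r, |h w| ∂μ := by
  have hr : 0 < r := by linarith [dist_nonneg.trans_lt (mem_ball.1 hy)]
  have hsub : ball y (θ * r) ⊆ ball x r :=
    ball_subset_ball' (by nlinarith [mem_ball.1 hy])
  obtain ⟨z, hz, hzavg⟩ := exists_le_setAverage (measure_ball_pos μ y (by positivity)).ne'
    measure_ball_lt_top.ne (hint.mono_set hsub).abs
  have havg := setAverage_ball_le_of_subset μ (fun w => abs_nonneg (h w)) (by positivity) hsub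
    hint.abs
  rw [div_mul_cancel_right₀ hr.ne'] at havg
  have hyz : |h y - h z| ≤ (θ * r) ^ α * M := by
    rcases eq_or_ne y z with rfl | hne
    · rw [sub_self, abs_zero]
      positivity
    · refine (hHolder y (ball_subset_ball (by linarith) hy) z (hsub hz) hne).trans ?_
      gcongr
      exact (mem_ball_iff_norm'.1 hz).le
  linarith [abs_sub_abs_le_abs_sub (h y) (h z)]

end

theorem exists_pos_le_mul_rpow_le {α : ℝ} (hα : 0 < α) (C : ℝ) {b ε : ℝ} (hb : 0 < b)
    (hε : 0 < ε) : ∃ θ : ℝ, 0 < θ ∧ θ ≤ b ∧ C * θ ^ α ≤ ε := by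
  have hlim : Tendsto (fun θ : ℝ => C * θ ^ α) (𝓝[>] 0) (𝓝 0) := by
    simpa [Real.zero_rpow hα.ne'] using
      ((Real.continuousAt_rpow_const 0 α (.inr hα.le)).tendsto.const_mul C).mono_left
        nhdsWithin_le_nhds
  obtain ⟨θ, hθC, hθ0, hθb⟩ := ((hlim.eventually (ge_mem_nhds hε)).and
    (Ioc_mem_nhdsGT hb)).exists
  exact ⟨θ, hθ0, hθb, hθC⟩

theorem Asymptotics.IsLittleO.comp_const_mul_sq {f : ℝ → ℝ}
    (hf : f =o[𝓝[>] 0] fun r => r ^ 2) {c : ℝ} (hc : 0 < c) :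
    (fun r => f (c * r)) =o[𝓝[>] 0] fun r => r ^ 2 := by
  have hk : Tendsto (c * ·) (𝓝[>] (0 : ℝ)) (𝓝[>] 0) :=
    tendsto_iff_comap.2 (comap_mulLeft_nhdsGT_zero hc).ge
  refine (hf.comp_tendsto hk).trans_isBigO ?_
  simpa [Function.comp_def, mul_pow] using
    (isBigO_refl (fun r : ℝ => r ^ 2) _).const_mul_left (c ^ 2)

theorem rpow_mul_holderModulus_eq {C θ r α a : ℝ} (hθ : 0 ≤ θ) (hr : 0 < r) :
    (θ * r) ^ α * (C / r ^ α * a + C * r ^ (2 - α)) = C * θ ^ α * (a + r ^ 2) := by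
  have hrα : r ^ α * r ^ (2 - α) = r ^ 2 := by
    rw [← Real.rpow_add hr, add_sub_cancel, Real.rpow_two]
  rw [Real.mul_rpow hθ hr.le, ← hrα]
  field_simp [(Real.rpow_pos_of_pos hr α).ne']

theorem sup_littleO_of_mean_littleO_general
    (n : ℕ) (α C : ℝ) (hα0 : 0 < α) (hC : 0 < C)
    (h : EuclideanSpace ℝ (Fin n) → ℝ)
    (hcont : ContinuousOn h (ball (0 : EuclideanSpace ℝ (Fin n)) 1))
    (hHolder : ∀ r : ℝ, 0 < r → r < 1 / 2 →
      ∀ y ∈ ball (0 : EuclideanSpace ℝ (Fin n)) r,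
        ∀ z ∈ ball (0 : EuclideanSpace ℝ (Fin n)) r, y ≠ z →
        |h y - h z| ≤ ‖y - z‖ ^ α *
          (C / r ^ α * (⨍ w in ball (0 : EuclideanSpace ℝ (Fin n)) (2 * r), |h w|)
            + C * r ^ (2 - α)))
    (hmean : (fun r : ℝ => ⨍ w in ball (0 : EuclideanSpace ℝ (Fin n)) r, |h w|)
      =o[𝓝[>] (0 : ℝ)] (fun r => r ^ 2)) :
    ∀ ε : ℝ, 0 < ε → ∃ δ : ℝ, 0 < δ ∧ ∀ r : ℝ, 0 < r → r < δ →
      ∀ y ∈ ball (0 : EuclideanSpace ℝ (Fin n)) (r / 2), |h y| ≤ ε * r ^ 2 := by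
  intro ε hε
  obtain ⟨θ, hθ0, hθ, hCθ⟩ := exists_pos_le_mul_rpow_le hα0 C (by norm_num : (0 : ℝ) < 1 / 2)
    (half_pos hε)
  set A : ℝ → ℝ := fun r => ⨍ w in ball (0 : EuclideanSpace ℝ (Fin n)) r, |h w|
  have hsmall := (((hmean.comp_const_mul_sq two_pos).const_mul_left (C * θ ^ α)).add
    (hmean.const_mul_left (θ⁻¹ ^ n))).bound (half_pos hε)
  obtain ⟨δ, hδ0, hδ⟩ := (nhdsGT_basis (0 : ℝ)).eventually_iff.1
    (((gt_mem_nhds (by norm_num : (0 : ℝ) < 1 / 2)).filter_mono nhdsWithin_le_nhds).and hsmall)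
  refine ⟨δ, hδ0, fun r hr0 hrδ y hy => ?_⟩
  obtain ⟨hr, hbound⟩ := hδ ⟨hr0, hrδ⟩
  have hint : IntegrableOn h (ball 0 r) :=
    ((hcont.mono (closedBall_subset_ball (by linarith))).integrableOn_compact
      (isCompact_closedBall 0 r)).mono_set ball_subset_closedBall
  have hM : 0 ≤ C / r ^ α * A (2 * r) + C * r ^ (2 - α) := by
    have : 0 ≤ A (2 * r) := integral_nonneg fun _ => abs_nonneg _
    positivity
  calc |h y| ≤ (θ * r) ^ α * (C / r ^ α * A (2 * r) + C * r ^ (2 - α)) + θ⁻¹ ^ n * A r := by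
        simpa using abs_le_of_holder_of_setAverage volume hα0.le hθ0 hθ hM hint
          (hHolder r hr0 hr) hy
    _ = C * θ ^ α * r ^ 2 + (C * θ ^ α * A (2 * r) + θ⁻¹ ^ n * A r) := by
        rw [rpow_mul_holderModulus_eq hθ0.le hr0]; ring
    _ ≤ ε / 2 * r ^ 2 + ε / 2 * r ^ 2 := by
        gcongr
        exact (le_abs_self _).trans (by simpa using hbound)
    _ = ε * r ^ 2 := by ring

/-- The interpolation step: if a continuous function `h` on the unit ball satisfies the
interior Hölder-type estimate and its `L¹`-means over balls `B(0,r)` are `o(r²)`, then its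
supremum over the half-balls `B(0, r/2)` is also `o(r²)` as `r → 0⁺`. -/
theorem sup_littleO_of_mean_littleO
    (n : ℕ) (hn : 1 ≤ n) (α C : ℝ) (hα0 : 0 < α) (hα1 : α ≤ 1) (hC : 0 < C)
    (h : EuclideanSpace ℝ (Fin n) → ℝ)
    (hcont : ContinuousOn h (ball (0 : EuclideanSpace ℝ (Fin n)) 1))
    (hHolder : ∀ r : ℝ, 0 < r → r < 1 / 2 →
      ∀ y ∈ ball (0 : EuclideanSpace ℝ (Fin n)) r,
        ∀ z ∈ ball (0 : EuclideanSpace ℝ (Fin n)) r, y ≠ z →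
        |h y - h z| ≤ ‖y - z‖ ^ α *
          (C / r ^ α * (⨍ w in ball (0 : EuclideanSpace ℝ (Fin n)) (2 * r), |h w|)
            + C * r ^ (2 - α)))
    (hmean : (fun r : ℝ => ⨍ w in ball (0 : EuclideanSpace ℝ (Fin n)) r, |h w|)
      =o[𝓝[>] (0 : ℝ)] (fun r => r ^ 2)) :
    ∀ ε : ℝ, 0 < ε → ∃ δ : ℝ, 0 < δ ∧ ∀ r : ℝ, 0 < r → r < δ →
      ∀ y ∈ ball (0 : EuclideanSpace ℝ (Fin n)) (r / 2), |h y| ≤ ε * r ^ 2 :=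
  sup_littleO_of_mean_littleO_general n α C hα0 hC h hcont hHolder hmean

end
end

section
/- Let n ≥ 2 and fix i ∈ {1,…,n}. The vector λ ∈ ℝⁿ with λ_i = 0 and λ_j = 1 for all j ≠ i lies in the dual cone Γ_2*; equivalently, for every μ ∈ ℝⁿ with Σ_{j=1}^n μ_j ≥ 0 and S_2(μ) = Σ_{j<l} μ_j μ_l ≥ 0, one has Σ_{j ≠ i} μ_j ≥ 0. -/
open MeasureTheory Metric Filter Finset Topology Asymptotics

noncomputable section

lemma two_mul_esymm2 {α : Type*} [DecidableEq α] (μ : α → ℝ) (s : Finset α) :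
    2 * ∑ t ∈ s.powersetCard 2, ∏ i ∈ t, μ i
      = (∑ i ∈ s, μ i) ^ 2 - ∑ i ∈ s, μ i ^ 2 := by
  induction s using Finset.induction with
  | empty => rw [Finset.powersetCard_eq_empty.2 (by simp)]; simp
  | @insert a s ha ih =>
    rw [Finset.powersetCard_succ_insert ha, Finset.sum_union, Finset.sum_image,
      Finset.sum_insert ha, Finset.sum_insert ha]
    · have h1 : ∀ t ∈ s.powersetCard 1, ∏ i ∈ insert a t, μ i = μ a * ∏ i ∈ t, μ i := by
        intro t ht
        have : a ∉ t := fun h => ha ((Finset.mem_powersetCard.1 ht).1 h)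
        rw [Finset.prod_insert this]
      rw [Finset.sum_congr rfl h1, ← Finset.mul_sum, Finset.powersetCard_one,
        Finset.sum_map]
      simp only [Function.Embedding.coeFn_mk, Finset.prod_singleton]
      ring_nf
      linarith [ih]
    · intro t ht u hu h
      have hat : a ∉ t := fun h => ha ((Finset.mem_powersetCard.1 ht).1 h)
      have hau : a ∉ u := fun h => ha ((Finset.mem_powersetCard.1 hu).1 h)
      have := congrArg (Finset.erase · a) h
      simpa [Finset.erase_insert hat, Finset.erase_insert hau] using this
    · rw [Finset.disjoint_left]
      intro t ht ht2
      obtain ⟨u, hu, rfl⟩ := Finset.mem_image.1 ht2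
      exact ha ((Finset.mem_powersetCard.1 ht).1 (Finset.mem_insert_self a u))


/-- The vector with `i`-th coordinate `0` and all other coordinates `1` lies in the dual
cone `Γ_2^*`; equivalently, if `Σ μⱼ ≥ 0` and `S_2(μ) ≥ 0` then `Σ_{j ≠ i} μⱼ ≥ 0`. -/
theorem diag_truncated_ones_mem_dual_gamma_two
    (n : ℕ) (hn : 2 ≤ n) (i : Fin n) :
    (∀ μ ∈ Gamma n 2, 0 ≤ ∑ j, (if j = i then (0 : ℝ) else 1) * μ j) ∧
    (∀ μ : Fin n → ℝ, 0 ≤ ∑ j, μ j → 0 ≤ esymm n 2 μ →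
      0 ≤ ∑ j ∈ Finset.univ.erase i, μ j) := by
  have key : ∀ μ : Fin n → ℝ, 0 ≤ ∑ j, μ j → 0 ≤ esymm n 2 μ →
      0 ≤ ∑ j ∈ Finset.univ.erase i, μ j := by
    intro μ hs h2
    have hid := two_mul_esymm2 μ (Finset.univ : Finset (Fin n))
    have hsq : μ i ^ 2 ≤ ∑ j, μ j ^ 2 :=
      Finset.single_le_sum (fun j _ => sq_nonneg (μ j)) (Finset.mem_univ i)
    have herase : ∑ j ∈ Finset.univ.erase i, μ j = (∑ j, μ j) - μ i := by
      rw [Finset.sum_erase_eq_sub (Finset.mem_univ i)]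
    rw [herase]
    unfold esymm at h2
    nlinarith [sq_nonneg (∑ j, μ j), sq_nonneg (μ i)]
  constructor
  · intro μ hμ
    have h1 : 0 ≤ esymm n 1 μ := hμ 1 le_rfl (by norm_num)
    have hsum : 0 ≤ ∑ j, μ j := by
      have : esymm n 1 μ = ∑ j, μ j := by
        unfold esymm
        rw [Finset.powersetCard_one, Finset.sum_map]
        simp
      linarith [this ▸ h1]
    have := key μ hsum (hμ 2 (by norm_num) le_rfl)
    have hrw : ∑ j, (if j = i then (0 : ℝ) else 1) * μ j
        = ∑ j ∈ Finset.univ.erase i, μ j := by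
      rw [← Finset.sum_erase_add _ _ (Finset.mem_univ i), if_pos rfl, zero_mul, add_zero]
      exact Finset.sum_congr rfl fun j hj => by
        rw [if_neg (Finset.mem_erase.1 hj).1, one_mul]
    rw [hrw]
    exact this
  · exact key

end
end

section
/- Let n ≥ 2. The dual cone of Γ_2 admits the explicit characterization Γ_2* = { λ ∈ Γ_n : |λ|² ≤ (1/(n−1)) (Σ_{i=1}^n λ_i)² }, where Γ_n = {λ ∈ ℝⁿ : λ_i ≥ 0 for all i} is the nonnegative orthant and |λ| is the Euclidean norm. -/
open MeasureTheory Metric Filter Finset Topology Asymptotics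

noncomputable section

/-!
Since `2 S₂(μ) = (Σ μᵢ)² - |μ|²`, the cone `Γ₂` is `{μ : Σ μᵢ ≥ 0, |μ|² ≤ (Σ μᵢ)²}`: the circular
cone around the diagonal `ℝ (1,…,1)` whose half-aperture `θ` has `tan² θ = n - 1`. The dual of
such a cone with `tan² θ = c` is the one with `tan² θ = 1/c`: one inclusion is Cauchy–Schwarz for
the components orthogonal to the diagonal, the other comes from testing `λ` against the boundary
ray of the cone on the far side of the diagonal. For `c = 1/(n - 1)` the membership condition is
`|λ|² ≤ (Σ λᵢ)² / (n - 1)`, and pairing with the coordinate vectors `eᵢ ∈ Γ₂` gives `λᵢ ≥ 0`.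
-/

lemma esymm_eq_eval (n j : ℕ) (lam : Fin n → ℝ) :
    esymm n j lam = MvPolynomial.eval lam (MvPolynomial.esymm (Fin n) ℝ j) := by
  simp [esymm, MvPolynomial.esymm, map_sum, map_prod]

lemma esymm_one (n : ℕ) (lam : Fin n → ℝ) : esymm n 1 lam = ∑ i, lam i := by
  simp [esymm_eq_eval, MvPolynomial.esymm_one]

lemma two_mul_esymm_two (n : ℕ) (lam : Fin n → ℝ) :
    2 * esymm n 2 lam = (∑ i, lam i) ^ 2 - ∑ i, lam i ^ 2 := by
  have newton := congrArg (MvPolynomial.eval lam) (MvPolynomial.mul_esymm_eq_sum (Fin n) ℝ 2)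
  have hlow : {a ∈ antidiagonal 2 | a.1 < 2} = ({(0, 2), (1, 1)} : Finset (ℕ × ℕ)) := by decide
  rw [hlow] at newton
  simp [MvPolynomial.psum, MvPolynomial.esymm_one] at newton
  rw [esymm_eq_eval]
  linear_combination newton

lemma mem_Gamma_two_iff {n : ℕ} {μ : Fin n → ℝ} :
    μ ∈ Gamma n 2 ↔ 0 ≤ ∑ i, μ i ∧ ∑ i, μ i ^ 2 ≤ (∑ i, μ i) ^ 2 := by
  have hS₂ := two_mul_esymm_two n μ
  refine ⟨fun h => ⟨esymm_one n μ ▸ h 1 le_rfl one_le_two, ?_⟩,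
    fun ⟨hsum, hsq⟩ j hj₁ hj₂ => ?_⟩
  · linarith [h 2 one_le_two le_rfl]
  · interval_cases j
    · rwa [esymm_one]
    · linarith

lemma single_mem_Gamma_two {n : ℕ} (i : Fin n) : (Pi.single i 1 : Fin n → ℝ) ∈ Gamma n 2 := by
  rw [mem_Gamma_two_iff]
  simp [Pi.single_apply]

section DiagonalCone

variable {ι : Type*} [Fintype ι]

def centered (f : ι → ℝ) (i : ι) : ℝ := Fintype.card ι * f i - ∑ j, f j

/-- With `n = card ι`, `n |f|² - (Σ f)² = n |f - mean f|²` and `(Σ f)² = n |mean f|²`, so this is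
the circular cone around the diagonal whose half-aperture `θ` has `tan² θ = c`. -/
def diagonalCone (ι : Type*) [Fintype ι] (c : ℝ) : Set (ι → ℝ) :=
  {f | 0 ≤ ∑ i, f i ∧ Fintype.card ι * ∑ i, f i ^ 2 - (∑ i, f i) ^ 2 ≤ c * (∑ i, f i) ^ 2}

lemma mem_diagonalCone_iff {c : ℝ} {f : ι → ℝ} (hι : 0 < Fintype.card ι) :
    f ∈ diagonalCone ι c ↔
      0 ≤ ∑ i, f i ∧ ∑ i, f i ^ 2 ≤ (1 + c) / Fintype.card ι * (∑ i, f i) ^ 2 := by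
  have hι' : (0 : ℝ) < Fintype.card ι := by exact_mod_cast hι
  rw [diagonalCone, Set.mem_ofPred_eq, div_mul_eq_mul_div, le_div_iff₀ hι']
  constructor <;> rintro ⟨h1, h2⟩ <;> exact ⟨h1, by linarith⟩

lemma sum_centered_mul (f g : ι → ℝ) :
    ∑ i, centered f i * g i = Fintype.card ι * ∑ i, f i * g i - (∑ i, f i) * ∑ i, g i := by
  simp only [centered, sub_mul, sum_sub_distrib, mul_assoc, ← mul_sum]

lemma sum_centered (f : ι → ℝ) : ∑ i, centered f i = 0 := by
  simpa [mul_comm] using sum_centered_mul f 1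

lemma sum_centered_mul_centered (f g : ι → ℝ) :
    ∑ i, centered f i * centered g i =
      Fintype.card ι * (Fintype.card ι * ∑ i, f i * g i - (∑ i, f i) * ∑ i, g i) := by
  calc ∑ i, centered f i * centered g i
      = ∑ i, (Fintype.card ι * (centered f i * g i) - (∑ j, g j) * centered f i) := by
        congr! 1 with i; unfold centered; ring
    _ = _ := by rw [sum_sub_distrib, ← mul_sum, ← mul_sum, sum_centered, sum_centered_mul]; ring

lemma sq_card_mul_sum_mul_sub_le (f g : ι → ℝ) :
    (Fintype.card ι * ∑ i, f i * g i - (∑ i, f i) * ∑ i, g i) ^ 2 ≤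
      (Fintype.card ι * ∑ i, f i ^ 2 - (∑ i, f i) ^ 2) *
        (Fintype.card ι * ∑ i, g i ^ 2 - (∑ i, g i) ^ 2) := by
  rcases isEmpty_or_nonempty ι with hι | hι
  · simp
  have hcs := sum_mul_sq_le_sq_mul_sq univ (centered f) (centered g)
  simp only [sq (centered _ _), sum_centered_mul_centered] at hcs
  simp only [← sq] at hcs
  rw [mul_pow, mul_mul_mul_comm, ← sq] at hcs
  exact le_of_mul_le_mul_left hcs (by positivity)

lemma one_mem_diagonalCone {c : ℝ} (hc : 0 ≤ c) : (1 : ι → ℝ) ∈ diagonalCone ι c := by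
  simp only [diagonalCone, Set.mem_ofPred_eq, Pi.one_apply, one_pow, sum_const, card_univ,
    nsmul_eq_mul, mul_one, ← sq, sub_self]
  exact ⟨by positivity, by positivity⟩

lemma sub_centered_mem_diagonalCone {c a : ℝ} {f : ι → ℝ} (ha : 0 ≤ a)
    (h : Fintype.card ι * ∑ i, f i ^ 2 - (∑ i, f i) ^ 2 ≤ c * a ^ 2) :
    (fun i => a - centered f i) ∈ diagonalCone ι c := by
  have hsum : ∑ i, (a - centered f i) = Fintype.card ι * a := by
    simp [sum_sub_distrib, sum_centered]
  have hsq : ∑ i, (a - centered f i) ^ 2 =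
      Fintype.card ι * a ^ 2 +
        Fintype.card ι * (Fintype.card ι * ∑ i, f i ^ 2 - (∑ i, f i) ^ 2) := by
    simp only [sub_sq, sum_add_distrib, sum_sub_distrib, ← mul_sum, sum_centered, sq (centered _ _),
      sum_centered_mul_centered, sum_const, card_univ, nsmul_eq_mul]
    simp only [← sq]
    ring
  refine ⟨hsum ▸ by positivity, ?_⟩
  rw [hsum, hsq]
  nlinarith [mul_le_mul_of_nonneg_left h (sq_nonneg (Fintype.card ι : ℝ))]

lemma sum_mul_sub_centered (a : ℝ) (f : ι → ℝ) :
    ∑ i, f i * (a - centered f i) =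
      a * ∑ i, f i - (Fintype.card ι * ∑ i, f i ^ 2 - (∑ i, f i) ^ 2) := by
  simp only [mul_sub, sum_sub_distrib, ← sum_mul, mul_comm (f _) (centered f _), sum_centered_mul,
    ← sq]
  ring

lemma sum_mul_nonneg_of_mem_diagonalCone {c : ℝ} {f g : ι → ℝ} (hc : 0 < c)
    (hf : f ∈ diagonalCone ι c⁻¹) (hg : g ∈ diagonalCone ι c) : 0 ≤ ∑ i, f i * g i := by
  rcases isEmpty_or_nonempty ι with hι | hι
  · simp
  obtain ⟨hs, hDf⟩ := hf
  obtain ⟨ht, hDg⟩ := hg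
  have hDg₀ : 0 ≤ Fintype.card ι * ∑ i, g i ^ 2 - (∑ i, g i) ^ 2 :=
    sub_nonneg.2 (by simpa using sq_sum_le_card_mul_sum_sq (s := univ) (f := g))
  have hX := (sq_card_mul_sum_mul_sub_le f g).trans <| calc
    _ ≤ c⁻¹ * (∑ i, f i) ^ 2 * (Fintype.card ι * ∑ i, g i ^ 2 - (∑ i, g i) ^ 2) :=
        mul_le_mul_of_nonneg_right hDf hDg₀
    _ ≤ c⁻¹ * (∑ i, f i) ^ 2 * (c * (∑ i, g i) ^ 2) :=
        mul_le_mul_of_nonneg_left hDg (by positivity)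
    _ = ((∑ i, f i) * ∑ i, g i) ^ 2 := by field_simp
  have hn : (0 : ℝ) < Fintype.card ι := by exact_mod_cast Fintype.card_pos
  refine nonneg_of_mul_nonneg_right ?_ hn
  linarith [(abs_le_of_sq_le_sq' hX (mul_nonneg hs ht)).1]

theorem dual_diagonalCone {c : ℝ} (hc : 0 < c) :
    {f : ι → ℝ | ∀ g ∈ diagonalCone ι c, 0 ≤ ∑ i, f i * g i} = diagonalCone ι c⁻¹ := by
  ext f
  refine ⟨fun hf => ?_, fun hf g hg => sum_mul_nonneg_of_mem_diagonalCone hc hf hg⟩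
  set D := Fintype.card ι * ∑ i, f i ^ 2 - (∑ i, f i) ^ 2
  have hD : 0 ≤ D := sub_nonneg.2 (by simpa using sq_sum_le_card_mul_sum_sq (s := univ) (f := f))
  have hs : 0 ≤ ∑ i, f i := by simpa using hf 1 (one_mem_diagonalCone hc.le)
  -- `a - centered f` spans the boundary ray of the cone opposite to the off-diagonal part of `f`
  set a := √(D / c)
  have ha : c * a ^ 2 = D := by rw [Real.sq_sqrt (by positivity)]; field_simp
  have hpair : D ≤ a * ∑ i, f i := by
    have := hf _ (sub_centered_mem_diagonalCone (Real.sqrt_nonneg _) ha.ge)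
    rw [sum_mul_sub_centered] at this
    linarith
  suffices D ≤ c⁻¹ * (∑ i, f i) ^ 2 from ⟨hs, this⟩
  rcases hD.eq_or_lt with hD₀ | hD₀
  · rw [← hD₀]; positivity
  refine le_of_mul_le_mul_left ?_ hD₀
  calc D * D ≤ (a * ∑ i, f i) ^ 2 := by nlinarith
    _ = D * (c⁻¹ * (∑ i, f i) ^ 2) := by rw [mul_pow, ← ha]; field_simp

end DiagonalCone

lemma Gamma_two_eq_diagonalCone {n : ℕ} (hn : 0 < n) :
    Gamma n 2 = diagonalCone (Fin n) (n - 1) := by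
  ext μ
  rw [mem_Gamma_two_iff, mem_diagonalCone_iff (by simpa), Fintype.card_fin, add_sub_cancel,
    div_self (by positivity), one_mul]

/-- Explicit characterization of the dual cone of `Γ_2`:
`Γ_2^* = {λ ∈ Γ_n : |λ|² ≤ (Σ λᵢ)²/(n-1)}`. -/
theorem dual_gamma_two_characterization (n : ℕ) (hn : 2 ≤ n) :
    {lam : Fin n → ℝ | ∀ μ ∈ Gamma n 2, 0 ≤ ∑ i, lam i * μ i} =
    {lam : Fin n → ℝ | (∀ i, 0 ≤ lam i) ∧
      ∑ i, lam i ^ 2 ≤ (1 / ((n : ℝ) - 1)) * (∑ i, lam i) ^ 2} := by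
  have hn₁ : (0 : ℝ) < n - 1 := by
    rw [sub_pos]; exact_mod_cast hn
  have hdual : {lam : Fin n → ℝ | ∀ μ ∈ Gamma n 2, 0 ≤ ∑ i, lam i * μ i} =
      diagonalCone (Fin n) ((n : ℝ) - 1)⁻¹ := by
    rw [Gamma_two_eq_diagonalCone (by omega)]
    exact dual_diagonalCone hn₁
  have hcone (lam : Fin n → ℝ) : lam ∈ diagonalCone (Fin n) ((n : ℝ) - 1)⁻¹ ↔
      0 ≤ ∑ i, lam i ∧ ∑ i, lam i ^ 2 ≤ (1 / ((n : ℝ) - 1)) * (∑ i, lam i) ^ 2 := by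
    have hcoef : (1 + ((n : ℝ) - 1)⁻¹) / n = 1 / ((n : ℝ) - 1) := by field_simp; ring
    rw [mem_diagonalCone_iff (by simp; omega), Fintype.card_fin, hcoef]
  ext lam
  constructor
  · intro h
    refine ⟨fun i => ?_, ((hcone lam).1 (hdual ▸ h)).2⟩
    simpa [Pi.single_apply] using h _ (single_mem_Gamma_two i)
  · rintro ⟨hpos, hsq⟩
    exact hdual ▸ (hcone lam).2 ⟨sum_nonneg fun i _ => hpos i, hsq⟩

end
end

section
/- Let n ≥ 1 and 1 ≤ k ≤ n. The set Γ_k := {λ ∈ ℝⁿ : S_j(λ) ≥ 0 for all j = 1,…,k} is a closed convex cone with vertex at the origin: Γ_k is closed, and if λ, μ ∈ Γ_k and s, t ≥ 0, then sλ + tμ ∈ Γ_k. -/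
open MeasureTheory Metric Filter Finset Topology Asymptotics

noncomputable section

/-! Gårding's argument. Write `1 = (1, …, 1)`. By Taylor's formula `t ↦ S_k(ν + t·1)` is the
`(n-k)`-th Hasse derivative of `∏ (t + νᵢ)`, so by Rolle it has only real roots, and its
coefficients are positive multiples of `S_0(ν), …, S_k(ν)`. Hence `ν ∈ Γ_k` iff it has no positive
root, and every `ν + t·1` with `ν ∈ Γ_k`, `t > 0` lies in the hyperbolicity cone
`C = {x | S_k(x + s·1) ≠ 0 for all s ≥ 0}`. Moving the direction `1` to any `y ∈ C` along a
segment inside `C`, continuity of the complex roots shows that `z ↦ S_k(x + z·y)` has only real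
roots; moving `1` to `x ∈ C` the same way then keeps these roots negative, so `S_k(x + y) ≠ 0` for
`x, y ∈ C`. For `λ, μ ∈ Γ_k` and `t > 0` this applies to `λ + (t/2)·1` and `μ + (t/2)·1`, so
`S_k(λ + μ + t·1) ≠ 0`, i.e. `λ + μ ∈ Γ_k`. -/

open Polynomial

section ElemSymm

variable {R : Type*} [CommSemiring R] {n : ℕ}

def elemSymm (j : ℕ) (w : Fin n → R) : R :=
  ∑ s ∈ powersetCard j univ, ∏ i ∈ s, w i

theorem esymm_eq_elemSymm (j : ℕ) (lam : Fin n → ℝ) : esymm n j lam = elemSymm j lam := rfl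

theorem map_elemSymm {S : Type*} [CommSemiring S] (f : R →+* S) (j : ℕ) (w : Fin n → R) :
    f (elemSymm j w) = elemSymm j (f ∘ w) := by
  simp [elemSymm, map_sum, map_prod]

@[simp]
theorem elemSymm_zero (w : Fin n → R) : elemSymm 0 w = 1 := by
  simp [elemSymm]

theorem elemSymm_smul (c : R) (j : ℕ) (w : Fin n → R) :
    elemSymm j (c • w) = c ^ j * elemSymm j w := by
  rw [elemSymm, elemSymm, mul_sum]
  refine sum_congr rfl fun s hs => ?_
  simp [prod_mul_distrib, (mem_powersetCard.mp hs).2]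

theorem continuous_elemSymm [TopologicalSpace R] [IsTopologicalSemiring R] (j : ℕ) :
    Continuous (elemSymm j : (Fin n → R) → R) :=
  continuous_finsetSum _ fun _ _ => continuous_finsetProd _ fun i _ => continuous_apply i

end ElemSymm

section ShiftPoly

variable {R : Type*} [CommRing R] {n k : ℕ}

def shiftPoly (k : ℕ) (w : Fin n → R) : R[X] :=
  hasseDeriv (n - k) (∏ i, (X + C (w i)))

theorem eval_shiftPoly (hkn : k ≤ n) (w : Fin n → R) (z : R) :
    (shiftPoly k w).eval z = elemSymm k (w + z • 1) := by
  have hshift : taylor z (∏ i, (X + C (w i))) = ∏ i, (X + C ((w + z • 1) i)) := by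
    simp only [taylor_apply, Polynomial.prod_comp, add_comp, X_comp, C_comp, Pi.add_apply,
      Pi.smul_apply, Pi.one_apply, smul_eq_mul, mul_one, map_add, add_assoc]
    exact prod_congr rfl fun i _ => by rw [add_comm (C z)]
  rw [shiftPoly, ← taylor_coeff, hshift, prod_X_add_C_coeff _ _ (by simp), card_univ,
    Fintype.card_fin, Nat.sub_sub_self hkn, elemSymm]

theorem coeff_shiftPoly {j : ℕ} (hjk : j ≤ k) (hkn : k ≤ n) (w : Fin n → R) :
    (shiftPoly k w).coeff (k - j) = (n - j).choose (n - k) * elemSymm j w := by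
  rw [shiftPoly, hasseDeriv_coeff, show k - j + (n - k) = n - j by omega,
    prod_X_add_C_coeff _ _ (by simp), card_univ, Fintype.card_fin,
    Nat.sub_sub_self (by omega : j ≤ n), elemSymm]

theorem coeff_shiftPoly_self (hkn : k ≤ n) (w : Fin n → R) :
    (shiftPoly k w).coeff k = n.choose k := by
  simpa [Nat.choose_symm hkn] using coeff_shiftPoly (Nat.zero_le k) hkn w

theorem natDegree_shiftPoly_le (w : Fin n → R) : (shiftPoly k w).natDegree ≤ k := by
  have hprod : (∏ i, (X + C (w i))).natDegree ≤ n :=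
    (natDegree_prod_le _ _).trans
      ((sum_le_card_nsmul _ _ 1 fun i _ => by rw [natDegree_add_C]; exact natDegree_X_le).trans
        (by simp))
  have := natDegree_hasseDeriv_le (∏ i, (X + C (w i))) (n - k)
  rw [shiftPoly]
  omega

theorem map_shiftPoly {S : Type*} [CommRing S] (f : R →+* S) (w : Fin n → R) :
    (shiftPoly k w).map f = shiftPoly k (f ∘ w) := by
  ext i
  rw [shiftPoly, shiftPoly, coeff_map, hasseDeriv_coeff, hasseDeriv_coeff, map_mul, map_natCast,
    ← coeff_map, Polynomial.map_prod]
  simp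

end ShiftPoly

section RealRoots

variable {n k : ℕ}

theorem Polynomial.Splits.derivative_of_real {p : ℝ[X]} (hp : p.Splits) : p.derivative.Splits := by
  rw [splits_iff_card_roots] at hp ⊢
  have := card_roots_le_derivative p
  have := natDegree_derivative_le p
  have := card_roots' p.derivative
  omega

theorem natDegree_shiftPoly (hkn : k ≤ n) (ν : Fin n → ℝ) : (shiftPoly k ν).natDegree = k :=
  natDegree_eq_of_le_of_coeff_ne_zero (natDegree_shiftPoly_le ν)
    (by rw [coeff_shiftPoly_self hkn]; exact_mod_cast (Nat.choose_pos hkn).ne')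

theorem splits_shiftPoly (ν : Fin n → ℝ) : (shiftPoly k ν).Splits := by
  have hprod : (∏ i, (X + C (ν i))).Splits := Splits.prod fun i _ => Splits.X_add_C _
  have hder : (derivative^[n - k] (∏ i, (X + C (ν i)))).Splits := by
    induction n - k with
    | zero => exact hprod
    | succ m ih => rw [Function.iterate_succ_apply']; exact ih.derivative_of_real
  have hfact : derivative^[n - k] (∏ i, (X + C (ν i))) =
      C ((n - k).factorial : ℝ) * shiftPoly k ν := by
    rw [← factorial_smul_hasseDeriv, LinearMap.smul_apply, nsmul_eq_mul, ← map_natCast C]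
    rfl
  have h := hder.C_mul ((n - k).factorial : ℝ)⁻¹
  rwa [hfact, ← mul_assoc, ← C_mul, inv_mul_cancel₀ (by positivity), C_1, one_mul] at h

theorem coeff_prod_X_sub_C_nonneg {s : Multiset ℝ} (hs : ∀ r ∈ s, r ≤ 0) (i : ℕ) :
    0 ≤ (s.map fun r => X - C r).prod.coeff i := by
  induction s using Multiset.induction_on generalizing i with
  | empty => simp only [Multiset.map_zero, Multiset.prod_zero, coeff_one]; split_ifs <;> norm_num
  | cons r s ih =>
    have hr := hs r (Multiset.mem_cons_self r s)
    have ih := fun i => ih (fun x hx => hs x (Multiset.mem_cons_of_mem hx)) i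
    rw [Multiset.map_cons, Multiset.prod_cons, sub_mul, coeff_sub, coeff_C_mul]
    cases i with
    | zero => simp only [coeff_X_mul_zero]; nlinarith [ih 0]
    | succ i => rw [coeff_X_mul]; nlinarith [ih i, ih (i + 1)]

theorem Polynomial.Splits.coeff_nonneg_of_roots_nonpos {p : ℝ[X]} (hp : p.Splits)
    (hlc : 0 ≤ p.leadingCoeff) (hroots : ∀ r ∈ p.roots, r ≤ 0) (i : ℕ) : 0 ≤ p.coeff i := by
  rw [hp.eq_prod_roots, coeff_C_mul]
  exact mul_nonneg hlc (coeff_prod_X_sub_C_nonneg hroots i)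

theorem mem_Gamma_of_forall_pos_ne_zero (hkn : k ≤ n) {ν : Fin n → ℝ}
    (h : ∀ t : ℝ, 0 < t → esymm n k (ν + t • 1) ≠ 0) : ν ∈ Gamma n k := by
  intro j _ hjk
  have hroots : ∀ r ∈ (shiftPoly k ν).roots, r ≤ 0 := fun r hr => not_lt.mp fun hr0 =>
    h r hr0 (by rw [esymm_eq_elemSymm, ← eval_shiftPoly hkn]; exact (isRoot_of_mem_roots hr))
  have hlc : 0 ≤ (shiftPoly k ν).leadingCoeff := by
    rw [leadingCoeff, natDegree_shiftPoly hkn, coeff_shiftPoly_self hkn]; positivity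
  have hcoeff := (splits_shiftPoly ν).coeff_nonneg_of_roots_nonpos hlc hroots (k - j)
  rw [coeff_shiftPoly hjk hkn] at hcoeff
  have : (0 : ℝ) < (n - j).choose (n - k) := by exact_mod_cast Nat.choose_pos (by omega)
  exact nonneg_of_mul_nonneg_right hcoeff this

theorem coeff_shiftPoly_nonneg (hkn : k ≤ n) {ν : Fin n → ℝ} (hν : ν ∈ Gamma n k) (i : ℕ) :
    0 ≤ (shiftPoly k ν).coeff i := by
  rcases lt_or_ge k i with hki | hik
  · rw [coeff_eq_zero_of_natDegree_lt ((natDegree_shiftPoly_le ν).trans_lt hki)]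
  rw [show i = k - (k - i) by omega, coeff_shiftPoly (Nat.sub_le k i) hkn]
  rcases Nat.eq_zero_or_pos (k - i) with h0 | hpos
  · rw [h0, elemSymm_zero]; positivity
  · exact mul_nonneg (Nat.cast_nonneg _) (hν _ hpos (Nat.sub_le k i))

theorem esymm_add_smul_one_pos (hkn : k ≤ n) {ν : Fin n → ℝ} (hν : ν ∈ Gamma n k) {t : ℝ}
    (ht : 0 < t) : 0 < esymm n k (ν + t • 1) := by
  rw [esymm_eq_elemSymm, ← eval_shiftPoly hkn,
    eval_eq_sum_range' (Nat.lt_succ_of_le (natDegree_shiftPoly_le ν))]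
  refine sum_pos' (fun i _ => mul_nonneg (coeff_shiftPoly_nonneg hkn hν i) (by positivity))
    ⟨k, self_mem_range_succ k, ?_⟩
  rw [coeff_shiftPoly_self hkn]
  have := Nat.choose_pos hkn
  positivity

end RealRoots

section GardingCone

variable {n k : ℕ}

def gardingCone (n k : ℕ) : Set (Fin n → ℝ) :=
  {x | ∀ s : ℝ, 0 ≤ s → esymm n k (x + s • 1) ≠ 0}

variable {x y ν : Fin n → ℝ}

theorem esymm_ne_zero_of_mem_gardingCone (hx : x ∈ gardingCone n k) : esymm n k x ≠ 0 := by
  simpa using hx 0 le_rfl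

theorem add_smul_one_mem_gardingCone (hx : x ∈ gardingCone n k) {s : ℝ} (hs : 0 ≤ s) :
    x + s • 1 ∈ gardingCone n k := fun t ht => by
  rw [add_assoc, ← add_smul]
  exact hx _ (add_nonneg hs ht)

theorem smul_mem_gardingCone (hx : x ∈ gardingCone n k) {c : ℝ} (hc : 0 < c) :
    c • x ∈ gardingCone n k := fun s hs => by
  rw [show c • x + s • 1 = c • (x + (s / c) • 1) by
      rw [smul_add, smul_smul, mul_div_cancel₀ _ hc.ne'],
    esymm_eq_elemSymm, elemSymm_smul, ← esymm_eq_elemSymm]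
  exact mul_ne_zero (pow_ne_zero _ hc.ne') (hx _ (div_nonneg hs hc.le))

theorem add_smul_one_mem_gardingCone_of_mem_Gamma (hkn : k ≤ n) (hν : ν ∈ Gamma n k) {t : ℝ}
    (ht : 0 < t) : ν + t • 1 ∈ gardingCone n k := fun s hs => by
  rw [add_assoc, ← add_smul]
  exact (esymm_add_smul_one_pos hkn hν (by linarith)).ne'

theorem one_mem_gardingCone (hkn : k ≤ n) : (1 : Fin n → ℝ) ∈ gardingCone n k := by
  have hzero : (0 : Fin n → ℝ) ∈ Gamma n k := fun j hj _ => by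
    have h := elemSymm_smul (0 : ℝ) j (0 : Fin n → ℝ)
    rw [zero_smul, zero_pow (by omega), zero_mul] at h
    rw [esymm_eq_elemSymm, h]
  simpa using add_smul_one_mem_gardingCone_of_mem_Gamma hkn hzero one_pos

theorem smul_add_smul_one_mem_gardingCone (hkn : k ≤ n) (hy : y ∈ gardingCone n k) {a b : ℝ}
    (ha : 0 ≤ a) (hb : 0 ≤ b) (hab : 0 < a + b) : a • y + b • 1 ∈ gardingCone n k := by
  rcases ha.lt_or_eq with ha | rfl
  · exact add_smul_one_mem_gardingCone (smul_mem_gardingCone hy ha) hb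
  · simpa using smul_mem_gardingCone (one_mem_gardingCone hkn) (by simpa using hab)

end GardingCone

section LinePoly

variable {R : Type*} [CommRing R] {n k : ℕ}

def linePoly (k : ℕ) (w v : Fin n → R) : R[X] :=
  elemSymm k fun i => C (v i) * X + C (w i)

theorem eval_linePoly (w v : Fin n → R) (z : R) :
    (linePoly k w v).eval z = elemSymm k (w + z • v) := by
  rw [linePoly, ← coe_evalRingHom, map_elemSymm]
  congr 1
  funext i
  simp only [Function.comp_apply, coe_evalRingHom, eval_add, eval_mul, eval_C, eval_X,
    Pi.add_apply, Pi.smul_apply, smul_eq_mul]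
  ring

theorem natDegree_linePoly_le (w v : Fin n → R) : (linePoly k w v).natDegree ≤ k := by
  rw [linePoly, elemSymm]
  refine natDegree_sum_le_of_forall_le _ _ fun s hs => (natDegree_prod_le _ _).trans ?_
  refine (sum_le_card_nsmul _ _ 1 fun i _ => ?_).trans (by simp [(mem_powersetCard.mp hs).2])
  exact natDegree_linear_le

theorem coeff_linePoly_self (w v : Fin n → R) : (linePoly k w v).coeff k = elemSymm k v := by
  rw [linePoly, elemSymm, finsetSum_coeff, elemSymm]
  refine sum_congr rfl fun s hs => ?_
  have := coeff_prod_of_natDegree_le (s := s) (fun i => C (v i) * X + C (w i)) 1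
    fun i _ => natDegree_linear_le
  rw [mul_one, (mem_powersetCard.mp hs).2] at this
  simp [this]

theorem continuous_coeff_prod [TopologicalSpace R] [IsTopologicalRing R] {α ι : Type*}
    [TopologicalSpace α] (s : Finset ι) {F : ι → α → R[X]}
    (hF : ∀ i ∈ s, ∀ m, Continuous fun a => (F i a).coeff m) (m : ℕ) :
    Continuous fun a => (∏ i ∈ s, F i a).coeff m := by
  classical
  induction s using Finset.induction_on generalizing m with
  | empty => simpa [coeff_one] using continuous_const
  | insert i s hi ih =>
    simp only [prod_insert hi, coeff_mul]
    exact continuous_finsetSum _ fun p _ => (hF i (mem_insert_self i s) _).mul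
      (ih (fun j hj => hF j (mem_insert_of_mem hj)) _)

theorem continuous_coeff_linePoly [TopologicalSpace R] [IsTopologicalRing R] {α : Type*}
    [TopologicalSpace α] {w v : α → Fin n → R} (hw : Continuous w) (hv : Continuous v) (m : ℕ) :
    Continuous fun a => (linePoly k (w a) (v a)).coeff m := by
  simp only [linePoly, elemSymm, finsetSum_coeff]
  refine continuous_finsetSum _ fun s _ => continuous_coeff_prod s (fun i _ m => ?_) m
  simp only [coeff_add, coeff_C, coeff_C_mul_X]
  split_ifs <;> fun_prop

end LinePoly

section RootContinuity

variable {𝕜 : Type*} [NormedField 𝕜] [IsAlgClosed 𝕜]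

theorem exists_root_near_of_coeff_close {K : ℕ} (hK : K ≠ 0) {δ : ℝ} (hδ : 0 < δ) :
    ∃ ε > 0, ∀ f g : 𝕜[X], f.Monic → g.Monic → f.natDegree = K → g.natDegree = K →
      (∀ i, ‖g.coeff i - f.coeff i‖ < ε) → ∀ a, f.IsRoot a →
        ∃ b ∈ g.roots, ‖a - b‖ < δ * max ‖a‖ 1 := by
  refine ⟨δ ^ K / (K + 1), by positivity, fun f g hf hg hfK hgK hfg a ha => ?_⟩
  obtain ⟨b, hb, hab⟩ := exists_roots_norm_sub_lt_of_norm_coeff_sub_lt (by positivity) ha hf hg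
    (hgK.trans hfK.symm) hfg (IsAlgClosed.splits g)
  refine ⟨b, hb, hab.trans_le (le_of_eq ?_)⟩
  rw [hfK, mul_div_cancel₀ _ (by positivity), Real.pow_rpow_inv_natCast hδ.le hK]

theorem Polynomial.Monic.exists_root_mem_of_coeff_close {f : 𝕜[X]} (hf : f.Monic) {z : 𝕜}
    (hz : f.IsRoot z) {V : Set 𝕜} (hV : IsOpen V) (hzV : z ∈ V) :
    ∃ ε > 0, ∀ g : 𝕜[X], g.Monic → g.natDegree = f.natDegree →
      (∀ i, ‖g.coeff i - f.coeff i‖ < ε) → ∃ b ∈ g.roots, b ∈ V := by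
  obtain ⟨ρ, hρ, hball⟩ := Metric.isOpen_iff.mp hV z hzV
  have hK : f.natDegree ≠ 0 := fun h0 => by
    simp [hf.natDegree_eq_zero.mp h0] at hz
  obtain ⟨ε, hε, hnear⟩ :=
    exists_root_near_of_coeff_close (𝕜 := 𝕜) hK (δ := ρ / max ‖z‖ 1) (by positivity)
  refine ⟨ε, hε, fun g hg hgK hgf => ?_⟩
  obtain ⟨b, hb, hzb⟩ := hnear f g hf hg rfl hgK hgf z hz
  refine ⟨b, hb, hball ?_⟩
  rw [mem_ball, dist_comm, dist_eq_norm]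
  rwa [div_mul_cancel₀ _ (by positivity)] at hzb

theorem Polynomial.Monic.roots_mem_of_coeff_close {f : 𝕜[X]} (hf : f.Monic) {U : Set 𝕜}
    (hU : IsOpen U) (hfU : ∀ z ∈ f.roots, z ∈ U) :
    ∃ ε > 0, ∀ g : 𝕜[X], g.Monic → g.natDegree = f.natDegree →
      (∀ i, ‖g.coeff i - f.coeff i‖ < ε) → ∀ b ∈ g.roots, b ∈ U := by
  rcases eq_or_ne f.natDegree 0 with hK | hK
  · refine ⟨1, one_pos, fun g hg hgK _ b hb => ?_⟩
    simp [hg.natDegree_eq_zero.mp (hgK.trans hK)] at hb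
  classical
  obtain ⟨ρ, hρ, hthick⟩ := f.roots.toFinset.finite_toSet.isCompact.exists_thickening_subset_open
    hU fun z hz => hfU z (Multiset.mem_toFinset.mp hz)
  set R : ℝ := (cauchyBound f : ℝ)
  have hR : 1 ≤ R := by exact_mod_cast one_le_cauchyBound f
  obtain ⟨ε, hε, hnear⟩ := exists_root_near_of_coeff_close (𝕜 := 𝕜) hK
    (δ := min (1 / 2) (ρ / (2 * R))) (by positivity)
  refine ⟨ε, hε, fun g hg hgK hgf b hb => hthick ?_⟩
  obtain ⟨r, hr, hbr⟩ := hnear g f hg hf hgK rfl (fun i => by rw [norm_sub_rev]; exact hgf i) b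
    (isRoot_of_mem_roots hb)
  have hrR : ‖r‖ < R := by exact_mod_cast (isRoot_of_mem_roots hr).norm_lt_cauchyBound hf.ne_zero
  have hδ₁ := min_le_left (1 / 2 : ℝ) (ρ / (2 * R))
  have hδ₂ := min_le_right (1 / 2 : ℝ) (ρ / (2 * R))
  -- The factor in `hbr` is at most `1/2`, so `hbr` bounds `‖b‖` itself by `2R`.
  have hb2R : max ‖b‖ 1 ≤ 2 * R := by
    refine max_le (not_lt.mp fun hbig => ?_) (by linarith)
    have hmax : max ‖b‖ 1 = ‖b‖ := max_eq_left (by linarith)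
    have := norm_le_norm_add_norm_sub' b r
    rw [hmax] at hbr
    nlinarith [mul_le_mul_of_nonneg_right hδ₁ (norm_nonneg b)]
  rw [mem_thickening_iff]
  refine ⟨r, Multiset.mem_toFinset.mpr hr, ?_⟩
  rw [dist_eq_norm]
  calc ‖b - r‖ < min (1 / 2) (ρ / (2 * R)) * max ‖b‖ 1 := hbr
    _ ≤ ρ / (2 * R) * (2 * R) := mul_le_mul hδ₂ hb2R (by positivity) (by positivity)
    _ = ρ := div_mul_cancel₀ _ (by positivity)

end RootContinuity

section RootFamilies

variable {𝕜 : Type*} [NormedField 𝕜] {α : Type*} {l : Filter α} {F : α → 𝕜[X]} {f : 𝕜[X]}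
  {K : ℕ}

theorem eventually_forall_norm_coeff_sub_lt
    (hF : ∀ i, Tendsto (fun a => (F a).coeff i) l (𝓝 (f.coeff i)))
    (hdeg : ∀ᶠ a in l, (F a).natDegree ≤ f.natDegree) {ε : ℝ} (hε : 0 < ε) :
    ∀ᶠ a in l, ∀ i, ‖(F a).coeff i - f.coeff i‖ < ε := by
  have hlow : ∀ᶠ a in l, ∀ i ∈ range (f.natDegree + 1), ‖(F a).coeff i - f.coeff i‖ < ε :=
    (eventually_all_finset _).mpr fun i _ => by
      simpa [dist_eq_norm] using (Metric.tendsto_nhds.mp (hF i)) ε hε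
  filter_upwards [hlow, hdeg] with a hlow hdeg i
  by_cases hi : i ≤ f.natDegree
  · exact hlow i (mem_range.mpr (Nat.lt_succ_of_le hi))
  · rw [coeff_eq_zero_of_natDegree_lt (by omega), coeff_eq_zero_of_natDegree_lt (by omega),
      sub_zero, norm_zero]
    exact hε

theorem Polynomial.monic_C_inv_mul_of_coeff_ne_zero {p : 𝕜[X]} (hdeg : p.natDegree ≤ K)
    (hK : p.coeff K ≠ 0) : (C (p.coeff K)⁻¹ * p).Monic ∧ (C (p.coeff K)⁻¹ * p).natDegree = K := by
  have hpK := natDegree_eq_of_le_of_coeff_ne_zero hdeg hK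
  refine ⟨monic_C_mul_of_mul_leadingCoeff_eq_one ?_, ?_⟩
  · rw [leadingCoeff, hpK, inv_mul_cancel₀ hK]
  · rw [natDegree_C_mul (inv_ne_zero hK), hpK]

variable (hF : ∀ i, Tendsto (fun a => (F a).coeff i) l (𝓝 (f.coeff i)))
  (hdeg : ∀ᶠ a in l, (F a).natDegree ≤ K) (hfK : f.natDegree ≤ K) (hf : f.coeff K ≠ 0)
include hF hdeg hfK hf

theorem eventually_monic_rescaled {ε : ℝ} (hε : 0 < ε) :
    ∀ᶠ a in l, (F a).coeff K ≠ 0 ∧ (C ((F a).coeff K)⁻¹ * F a).Monic ∧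
      (C ((F a).coeff K)⁻¹ * F a).natDegree = K ∧
      ∀ i, ‖(C ((F a).coeff K)⁻¹ * F a).coeff i - (C (f.coeff K)⁻¹ * f).coeff i‖ < ε := by
  have hlim : ∀ i, Tendsto (fun a => (C ((F a).coeff K)⁻¹ * F a).coeff i) l
      (𝓝 ((C (f.coeff K)⁻¹ * f).coeff i)) := fun i => by
    simp only [coeff_C_mul]
    exact ((hF K).inv₀ hf).mul (hF i)
  have hne := (hF K).eventually_ne hf
  have hmonic : ∀ᶠ a in l, (C ((F a).coeff K)⁻¹ * F a).Monic ∧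
      (C ((F a).coeff K)⁻¹ * F a).natDegree = K := by
    filter_upwards [hne, hdeg] with a hne hdeg
    exact monic_C_inv_mul_of_coeff_ne_zero hdeg hne
  have hfK' := (monic_C_inv_mul_of_coeff_ne_zero hfK hf).2
  filter_upwards [hne, hmonic, eventually_forall_norm_coeff_sub_lt hlim
    (hmonic.mono fun a h => (h.2.trans hfK'.symm).le) hε] with a h₁ h₂ h₃
  exact ⟨h₁, h₂.1, h₂.2, h₃⟩

variable [IsAlgClosed 𝕜]

theorem eventually_exists_root_mem {z : 𝕜} (hz : f.IsRoot z) {V : Set 𝕜} (hV : IsOpen V)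
    (hzV : z ∈ V) : ∀ᶠ a in l, ∃ b ∈ (F a).roots, b ∈ V := by
  have hg := monic_C_inv_mul_of_coeff_ne_zero hfK hf
  obtain ⟨ε, hε, hclose⟩ := hg.1.exists_root_mem_of_coeff_close
    (IsRoot.def.mpr (by rw [eval_mul, hz.eq_zero, mul_zero])) hV hzV
  filter_upwards [eventually_monic_rescaled hF hdeg hfK hf hε] with a ⟨hne, hmonic, hdegK, hcoeff⟩
  rw [← roots_C_mul _ (inv_ne_zero hne)]
  exact hclose _ hmonic (hdegK.trans hg.2.symm) hcoeff

theorem eventually_roots_mem {U : Set 𝕜} (hU : IsOpen U) (hfU : ∀ z ∈ f.roots, z ∈ U) :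
    ∀ᶠ a in l, ∀ b ∈ (F a).roots, b ∈ U := by
  have hg := monic_C_inv_mul_of_coeff_ne_zero hfK hf
  obtain ⟨ε, hε, hclose⟩ := hg.1.roots_mem_of_coeff_close hU
    (by rwa [roots_C_mul _ (inv_ne_zero hf)])
  filter_upwards [eventually_monic_rescaled hF hdeg hfK hf hε] with a ⟨hne, hmonic, hdegK, hcoeff⟩
  rw [← roots_C_mul _ (inv_ne_zero hne)]
  exact hclose _ hmonic (hdegK.trans hg.2.symm) hcoeff

end RootFamilies

theorem IsPreconnected.roots_mem {𝕜 : Type*} [NormedField 𝕜] [IsAlgClosed 𝕜] {α : Type*}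
    [TopologicalSpace α] {S : Set α} (hS : IsPreconnected S) {F : α → 𝕜[X]} {K : ℕ}
    (hF : ∀ i, ContinuousOn (fun a => (F a).coeff i) S) (hdeg : ∀ a ∈ S, (F a).natDegree ≤ K)
    (hlead : ∀ a ∈ S, (F a).coeff K ≠ 0) {U : Set 𝕜} (hU : IsOpen U)
    (hfrontier : ∀ a ∈ S, ∀ z ∈ (F a).roots, z ∉ frontier U) {a b : α} (ha : a ∈ S)
    (hb : b ∈ S) (hroots : ∀ z ∈ (F a).roots, z ∈ U) : ∀ z ∈ (F b).roots, z ∈ U := by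
  let Q : α → Prop := fun a => ∀ z ∈ (F a).roots, z ∈ U
  refine hS.induction₂' (fun a b => Q a → Q b) (fun a ha => ?_)
    (fun _ _ _ _ _ _ h₁ h₂ h => h₂ (h₁ h)) ha hb hroots
  have hlim : ∀ i, Tendsto (fun b => (F b).coeff i) (𝓝[S] a) (𝓝 ((F a).coeff i)) :=
    fun i => hF i a ha
  have hdeg' : ∀ᶠ b in 𝓝[S] a, (F b).natDegree ≤ K :=
    eventually_nhdsWithin_of_forall hdeg
  by_cases hQa : Q a
  · filter_upwards [eventually_roots_mem hlim hdeg' (hdeg a ha) (hlead a ha) hU hQa] with b hb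
    exact ⟨fun _ => hb, fun _ => hQa⟩
  · obtain ⟨z, hz, hzU⟩ : ∃ z ∈ (F a).roots, z ∉ U := by
      by_contra! h
      exact hQa h
    have hzV : z ∈ (closure U)ᶜ := fun hcl =>
      hfrontier a ha z hz ⟨hcl, by rwa [hU.interior_eq]⟩
    filter_upwards [eventually_exists_root_mem hlim hdeg' (hdeg a ha) (hlead a ha)
      (isRoot_of_mem_roots hz) isClosed_closure.isOpen_compl hzV] with b ⟨w, hw, hwV⟩
    exact ⟨fun h => absurd (h z hz) hzU, fun h => absurd (subset_closure (h w hw)) hwV⟩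

section Hyperbolicity

open Complex

variable {n k : ℕ} {y : Fin n → ℝ}

theorem elemSymm_ofReal (j : ℕ) (x : Fin n → ℝ) : elemSymm j (ofReal ∘ x) = esymm n j x :=
  (map_elemSymm ofRealHom j x).symm

theorem ofReal_comp_add_smul (x v : Fin n → ℝ) (r : ℝ) :
    ofReal ∘ x + (r : ℂ) • ofReal ∘ v = ofReal ∘ (x + r • v) := by
  funext i
  simp

theorem elemSymm_add_smul_one_ne_zero (hkn : k ≤ n) (x : Fin n → ℝ) {z : ℂ} (hz : z.im ≠ 0) :
    elemSymm k (ofReal ∘ x + z • 1) ≠ 0 := by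
  intro h0
  have hne : shiftPoly k x ≠ 0 := fun h => by
    have := coeff_shiftPoly_self hkn x
    rw [h, coeff_zero] at this
    exact (Nat.choose_pos hkn).ne' (by exact_mod_cast this.symm)
  rw [← eval_shiftPoly hkn, show ofReal ∘ x = ofRealHom ∘ x from rfl, ← map_shiftPoly] at h0
  obtain ⟨r, rfl⟩ := (splits_shiftPoly x).mem_range_of_isRoot hne h0
  simp at hz

theorem coeff_linePoly_ne_zero (hy : y ∈ gardingCone n k) (w : Fin n → ℂ) :
    (linePoly k w (ofReal ∘ y)).coeff k ≠ 0 := by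
  rw [coeff_linePoly_self, elemSymm_ofReal]
  exact ofReal_ne_zero.mpr (esymm_ne_zero_of_mem_gardingCone hy)

theorem im_neg_of_mem_roots_linePoly (hkn : k ≤ n) (x : Fin n → ℝ) (hy : y ∈ gardingCone n k)
    {ε : ℝ} (hε : 0 < ε) {z : ℂ}
    (hz : z ∈ (linePoly k (ofReal ∘ x + (ε * I) • 1) (ofReal ∘ y)).roots) : z.im < 0 := by
  -- Deform the direction from `1` to `y` inside the cone: roots cannot cross the real axis,
  -- since `S_k(u + iε·1) ≠ 0` for real `u`.
  set path : ℝ → Fin n → ℝ := fun θ => θ • y + (1 - θ) • 1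
  have hpath : ∀ θ ∈ Set.Icc (0 : ℝ) 1, path θ ∈ gardingCone n k := fun θ hθ =>
    smul_add_smul_one_mem_gardingCone hkn hy hθ.1 (by linarith [hθ.2]) (by linarith)
  set F : ℝ → ℂ[X] := fun θ => linePoly k (ofReal ∘ x + (ε * I) • 1) (ofReal ∘ path θ)
  have hF1 : F 1 = linePoly k (ofReal ∘ x + (ε * I) • 1) (ofReal ∘ y) := by simp [F, path]
  refine isPreconnected_Icc.roots_mem (F := F) (U := {z | z.im < 0})
    (fun i => (continuous_coeff_linePoly continuous_const (by fun_prop) i).continuousOn)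
    (fun θ _ => natDegree_linePoly_le _ _) (fun θ hθ => coeff_linePoly_ne_zero (hpath θ hθ) _)
    (isOpen_lt continuous_im continuous_const) (fun θ hθ w hw hfr => ?_)
    (Set.left_mem_Icc.mpr zero_le_one) (Set.right_mem_Icc.mpr zero_le_one) (fun w hw => ?_)
    z (hF1 ▸ hz)
  · have hw0 : w.im = 0 := frontier_lt_subset_eq continuous_im continuous_const hfr
    have hroot := (isRoot_of_mem_roots hw).eq_zero
    rw [eval_linePoly, ← re_add_im w, hw0, ofReal_zero, zero_mul, add_zero, add_right_comm,
      ofReal_comp_add_smul] at hroot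
    exact elemSymm_add_smul_one_ne_zero hkn _ (by simp [hε.ne']) hroot
  · have hroot := (isRoot_of_mem_roots hw).eq_zero
    simp only [F, path, zero_smul, sub_zero, one_smul, zero_add, eval_linePoly] at hroot
    by_contra hwim
    rw [Set.mem_ofPred_eq, not_lt] at hwim
    refine elemSymm_add_smul_one_ne_zero hkn x (z := ε * I + w) (by simp; linarith) ?_
    rw [← hroot, add_smul, add_assoc]
    rfl

theorem im_eq_zero_of_elemSymm_eq_zero (hkn : k ≤ n) (x : Fin n → ℝ) (hy : y ∈ gardingCone n k)
    {z : ℂ} (hz : elemSymm k (ofReal ∘ x + z • ofReal ∘ y) = 0) : z.im = 0 := by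
  have him_nonpos : ∀ z : ℂ, elemSymm k (ofReal ∘ x + z • ofReal ∘ y) = 0 → z.im ≤ 0 := by
    intro z hz
    by_contra! hpos
    -- A root in the upper half plane at `ε = 0` would survive for small `ε > 0`.
    set F : ℝ → ℂ[X] := fun ε => linePoly k (ofReal ∘ x + (ε * I) • 1) (ofReal ∘ y)
    have hlim : ∀ i, Tendsto (fun ε => (F ε).coeff i) (𝓝[>] 0) (𝓝 ((F 0).coeff i)) := fun i =>
      ((continuous_coeff_linePoly (by fun_prop) continuous_const i).tendsto 0).mono_left
        nhdsWithin_le_nhds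
    have hroot : (F 0).IsRoot z := by simpa [F, eval_linePoly] using hz
    obtain ⟨ε, ⟨w, hw, hwim⟩, hε⟩ := ((eventually_exists_root_mem hlim
      (Eventually.of_forall fun ε => natDegree_linePoly_le _ _) (natDegree_linePoly_le _ _)
      (coeff_linePoly_ne_zero hy _) hroot (isOpen_lt continuous_const continuous_im) hpos).and
      self_mem_nhdsWithin).exists
    exact lt_asymm (im_neg_of_mem_roots_linePoly hkn x hy hε hw) hwim
  refine le_antisymm (him_nonpos z hz) ?_
  have hconj := congrArg (starRingEnd ℂ) hz
  rw [map_zero, map_elemSymm] at hconj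
  have := him_nonpos (starRingEnd ℂ z) (by
    rw [← hconj]
    congr 1
    funext i
    simp)
  simpa using this

theorem esymm_add_ne_zero_of_mem_gardingCone (hkn : k ≤ n) {x : Fin n → ℝ}
    (hx : x ∈ gardingCone n k) (hy : y ∈ gardingCone n k) : esymm n k (x + y) ≠ 0 := by
  -- Deform `x` to `1` inside the cone: the roots of `z ↦ S_k(x_θ + z·y)` are real and never `0`,
  -- and negative at `θ = 0`, so `z = 1` is never a root.
  set path : ℝ → Fin n → ℝ := fun θ => θ • x + (1 - θ) • 1
  have hpath : ∀ θ ∈ Set.Icc (0 : ℝ) 1, path θ ∈ gardingCone n k := fun θ hθ =>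
    smul_add_smul_one_mem_gardingCone hkn hx hθ.1 (by linarith [hθ.2]) (by linarith)
  set F : ℝ → ℂ[X] := fun θ => linePoly k (ofReal ∘ path θ) (ofReal ∘ y)
  have hreal : ∀ θ, ∀ w ∈ (F θ).roots, w = (w.re : ℂ) := fun θ w hw => by
    have him := im_eq_zero_of_elemSymm_eq_zero hkn (path θ) hy
      (by simpa [F, eval_linePoly] using (isRoot_of_mem_roots hw).eq_zero)
    rw [← re_add_im w, him, ofReal_zero, zero_mul, add_zero, ofReal_re]
  have hroots := isPreconnected_Icc.roots_mem (F := F) (U := {z | z.re < 0})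
    (fun i => (continuous_coeff_linePoly (by fun_prop) continuous_const i).continuousOn)
    (fun θ _ => natDegree_linePoly_le _ _) (fun θ _ => coeff_linePoly_ne_zero hy _)
    (isOpen_lt continuous_re continuous_const) (fun θ hθ w hw hfr => ?_)
    (Set.left_mem_Icc.mpr zero_le_one) (Set.right_mem_Icc.mpr zero_le_one) (fun w hw => ?_)
  · intro h0
    have hF1 : F 1 ≠ 0 := fun h => coeff_linePoly_ne_zero hy (ofReal ∘ path 1)
      (by rw [show linePoly k _ _ = F 1 from rfl, h, coeff_zero])
    have hmem : (1 : ℂ) ∈ (F 1).roots := by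
      rw [mem_roots hF1, IsRoot.def, eval_linePoly, ← ofReal_one, ofReal_comp_add_smul,
        elemSymm_ofReal]
      simp [path, h0]
    have := hroots 1 hmem
    norm_num at this
  · have hw0 : w.re = 0 := frontier_lt_subset_eq continuous_re continuous_const hfr
    have hroot := (isRoot_of_mem_roots hw).eq_zero
    rw [hreal θ w hw, hw0, ofReal_zero, eval_linePoly, zero_smul, add_zero, elemSymm_ofReal]
      at hroot
    exact esymm_ne_zero_of_mem_gardingCone (hpath θ hθ) (by exact_mod_cast hroot)
  · have hroot := (isRoot_of_mem_roots hw).eq_zero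
    rw [hreal 0 w hw, eval_linePoly, ofReal_comp_add_smul, elemSymm_ofReal] at hroot
    by_contra hwre
    rw [Set.mem_ofPred_eq, not_lt] at hwre
    have hmem := smul_add_smul_one_mem_gardingCone hkn hy hwre zero_le_one (by linarith)
    refine esymm_ne_zero_of_mem_gardingCone hmem ?_
    rw [add_comm]
    simpa [path] using hroot

end Hyperbolicity

section Convexity

variable {n k : ℕ} {lam μ : Fin n → ℝ}

theorem smul_mem_Gamma {c : ℝ} (hc : 0 ≤ c) (hlam : lam ∈ Gamma n k) : c • lam ∈ Gamma n k :=
  fun j hj hjk => by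
    rw [esymm_eq_elemSymm, elemSymm_smul]
    exact mul_nonneg (pow_nonneg hc j) (hlam j hj hjk)

theorem add_mem_Gamma (hkn : k ≤ n) (hlam : lam ∈ Gamma n k) (hμ : μ ∈ Gamma n k) :
    lam + μ ∈ Gamma n k := by
  refine mem_Gamma_of_forall_pos_ne_zero hkn fun t ht => ?_
  have h := esymm_add_ne_zero_of_mem_gardingCone hkn
    (add_smul_one_mem_gardingCone_of_mem_Gamma hkn hlam (half_pos ht))
    (add_smul_one_mem_gardingCone_of_mem_Gamma hkn hμ (half_pos ht))
  rwa [add_add_add_comm, ← add_smul, add_halves] at h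

theorem isClosed_Gamma : IsClosed (Gamma n k) := by
  simp only [Gamma, Set.ofPred_forall]
  exact isClosed_iInter fun j => isClosed_iInter fun _ => isClosed_iInter fun _ =>
    isClosed_le continuous_const (continuous_elemSymm j)

end Convexity

theorem gamma_k_closed_convex_cone_general (n k : ℕ) (hkn : k ≤ n) :
    IsClosed (Gamma n k) ∧
    ∀ lam ∈ Gamma n k, ∀ μ ∈ Gamma n k, ∀ s t : ℝ, 0 ≤ s → 0 ≤ t →
      s • lam + t • μ ∈ Gamma n k :=
  ⟨isClosed_Gamma, fun _ hlam _ hμ _ _ hs ht =>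
    add_mem_Gamma hkn (smul_mem_Gamma hs hlam) (smul_mem_Gamma ht hμ)⟩

/-- `Γ_k` is a closed convex cone with vertex at the origin. -/
theorem gamma_k_closed_convex_cone (n k : ℕ) (hn : 1 ≤ n) (hk1 : 1 ≤ k) (hkn : k ≤ n) :
    IsClosed (Gamma n k) ∧
    ∀ lam ∈ Gamma n k, ∀ μ ∈ Gamma n k, ∀ s t : ℝ, 0 ≤ s → 0 ≤ t →
      s • lam + t • μ ∈ Gamma n k :=
  gamma_k_closed_convex_cone_general n k hkn

end
end
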